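/- Let S₁, …, S_{n+1} be real-valued random variables on a probability space whose joint distribution is exchangeable, and assume additionally that the scores are almost surely pairwise distinct, i.e., P(S_i = S_j) = 0 for all i ≠ j. Let α ∈ (0,1), set k = ⌈(n+1)(1−α)⌉, assume k ≤ n, and let q̂ be the k-th smallest value among S₁, …, S_n. Then P(S_{n+1} ≤ q̂) ≤ 1 − α + 1/(n+1). -/

import Mathlib

open MeasureTheory

/-- The `k`-th smallest value (k-th order statistic, 1-indexed) among
`v 0, …, v (n-1)`. -/
noncomputable def kthSmallest (n : ℕ) (k : ℕ) (v : Fin n → ℝ) : ℝ :=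
  ((List.ofFn v).mergeSort (fun a b => a ≤ b)).getD (k - 1) 0

open Finset Function
open scoped ENNReal

/-!
Let `R` be the number of scores strictly below the test score `S (Fin.last n)`; the event
`S (Fin.last n) ≤ q̂` is exactly `R < k`. Exchangeability gives the ranks of all `n + 1` scores the
same distribution, and when the scores are distinct, each value `r ≤ n` is the rank of exactly
one of them. Hence `P(R = r) = 1 / (n + 1)` for every `r ≤ n`, and
`P(R < k) = k / (n + 1) ≤ 1 - α + 1 / (n + 1)`.
-/

theorem List.le_getElem_iff_countP_le {α : Type*} [LinearOrder α] {l : List α}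
    (hl : l.Pairwise (· ≤ ·)) (t : α) {i : ℕ} (hi : i < l.length) :
    t ≤ l[i] ↔ l.countP (· < t) ≤ i := by
  induction l generalizing i with
  | nil => simp at hi
  | cons a l ih =>
    obtain ⟨ha, hl⟩ := List.pairwise_cons.1 hl
    by_cases hat : a < t
    · cases i with
      | zero => simp [hat]
      | succ i =>
        simp only [List.getElem_cons_succ, List.countP_cons, hat, decide_true, if_true]
        rw [ih hl (by simpa using hi)]
        omega
    · have hmin : ∀ b ∈ a :: l, t ≤ b := by
        simpa [not_lt.1 hat] using fun b hb => (not_lt.1 hat).trans (ha b hb)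
      refine iff_of_true (hmin _ (List.getElem_mem hi)) ?_
      rw [List.countP_eq_zero.2 fun b hb hbt => (hmin b hb).not_gt (by simpa using hbt)]
      exact i.zero_le

theorem List.countP_ofFn_eq_card_filter {α : Type*} {n : ℕ} (w : Fin n → α) (p : α → Prop)
    [DecidablePred p] : (List.ofFn w).countP (p ·) = #{i | p (w i)} := by
  rw [List.ofFn_eq_map, List.countP_map, card_def, filter_val, Fin.univ_def,
    ← Multiset.countP_eq_card_filter]
  simp [Multiset.coe_countP, comp_def]

section Rank

variable {ι α : Type*} [Fintype ι] [LinearOrder α]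

def rank (v : ι → α) (i : ι) : ℕ := #{j | v j < v i}

theorem rank_lt_rank {v : ι → α} {i j : ι} (h : v i < v j) : rank v i < rank v j := by
  refine card_lt_card <| (ssubset_iff_of_subset fun k hk => ?_).2
    ⟨i, by simpa using h, by simp⟩
  simp only [mem_filter_univ] at hk ⊢
  exact hk.trans h

theorem eq_of_rank_eq {v : ι → α} {i j : ι} (h : rank v i = rank v j) : v i = v j := by
  by_contra hne
  rcases lt_or_gt_of_ne hne with hlt | hlt
  · exact (rank_lt_rank hlt).ne h
  · exact (rank_lt_rank hlt).ne' h

theorem rank_lt_card (v : ι → α) (i : ι) : rank v i < Fintype.card ι :=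
  card_lt_univ_of_notMem (x := i) (by simp)

theorem exists_rank_eq {v : ι → α} (hv : Injective v) {r : ℕ}
    (hr : r < Fintype.card ι) : ∃ i, rank v i = r := by
  let f : ι → Fin (Fintype.card ι) := fun i => ⟨rank v i, rank_lt_card v i⟩
  have hf : Bijective f := (Fintype.bijective_iff_injective_and_card f).2
    ⟨fun i j hij => hv (eq_of_rank_eq (congrArg Fin.val hij)), by simp⟩
  obtain ⟨i, hi⟩ := hf.2 ⟨r, hr⟩
  exact ⟨i, congrArg Fin.val hi⟩

theorem rank_comp_perm (v : ι → α) (σ : Equiv.Perm ι) (i : ι) :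
    rank (v ∘ σ) i = rank v (σ i) :=
  card_equiv σ (by simp)

theorem rank_last {n : ℕ} (v : Fin (n + 1) → α) :
    rank v (Fin.last n) = #{i : Fin n | v i.castSucc < v (Fin.last n)} := by
  rw [rank, Fin.univ_castSuccEmb, filter_cons, if_neg (lt_irrefl _), filter_map,
    card_map]
  rfl

end Rank

def IsExchangeable {ι β : Type*} [MeasurableSpace β] (μ : Measure (ι → β)) : Prop :=
  ∀ σ : Equiv.Perm ι, μ.map (fun v => v ∘ σ) = μ

theorem ae_injective_of_measure_eq_zero {ι β : Type*} [Countable ι] [MeasurableSpace β]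
    {μ : Measure (ι → β)} (h : ∀ i j, i ≠ j → μ {v | v i = v j} = 0) :
    ∀ᵐ v ∂μ, Injective v := by
  simp only [Injective, ae_all_iff]
  intro i j
  by_cases hij : i = j
  · exact .of_forall fun _ _ => hij
  · filter_upwards [measure_eq_zero_iff_ae_notMem.1 (h i j hij)] with v hv heq
    exact (hv heq).elim

section RankDistribution

variable {ι α : Type*} [Fintype ι] [LinearOrder α] [TopologicalSpace α] [OrderClosedTopology α]
  [SecondCountableTopology α] [MeasurableSpace α] [OpensMeasurableSpace α]

theorem measurable_rank (i : ι) : Measurable fun v : ι → α => rank v i := by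
  simp only [rank, card_filter]
  exact measurable_sum _ fun j _ => Measurable.ite
    (measurableSet_lt (measurable_pi_apply j) (measurable_pi_apply i)) measurable_const
    measurable_const

theorem measurableSet_rank_eq (i : ι) (r : ℕ) : MeasurableSet {v : ι → α | rank v i = r} :=
  measurable_rank i (measurableSet_singleton r)

theorem measurableSet_rank_lt (i : ι) (k : ℕ) : MeasurableSet {v : ι → α | rank v i < k} :=
  measurable_rank i measurableSet_Iio

theorem IsExchangeable.measure_rank_eq {μ : Measure (ι → α)} (hμ : IsExchangeable μ) (r : ℕ)
    (i j : ι) : μ {v | rank v i = r} = μ {v | rank v j = r} := by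
  classical
  let σ := Equiv.swap i j
  have hpre : {v : ι → α | rank v j = r} = (fun v => v ∘ σ) ⁻¹' {v | rank v i = r} := by
    ext v
    simp [σ, rank_comp_perm]
  rw [hpre, ← Measure.map_apply (by fun_prop) (measurableSet_rank_eq i r), hμ σ]

theorem IsExchangeable.measure_rank_eq_inv_card {μ : Measure (ι → α)} [IsProbabilityMeasure μ]
    (hμ : IsExchangeable μ) (hdist : ∀ i j, i ≠ j → μ {v | v i = v j} = 0) (i : ι) {r : ℕ}
    (hr : r < Fintype.card ι) : μ {v | rank v i = r} = (Fintype.card ι : ℝ≥0∞)⁻¹ := by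
  have hcover : μ (⋃ j, {v | rank v j = r}) = 1 := by
    rw [measure_congr (ae_eq_univ.2 ?_), measure_univ]
    exact (ae_injective_of_measure_eq_zero hdist).mono fun v hv =>
      Set.mem_iUnion.2 (exists_rank_eq hv hr)
  have hdisj : Pairwise (AEDisjoint μ on fun j => {v : ι → α | rank v j = r}) :=
    fun j j' hjj' => measure_mono_null (fun v hv => eq_of_rank_eq (hv.1.trans hv.2.symm))
      (hdist j j' hjj')
  rw [measure_iUnion₀ hdisj fun j => (measurableSet_rank_eq j r).nullMeasurableSet,
    tsum_fintype, sum_congr rfl fun j _ => hμ.measure_rank_eq r j i, sum_const,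
    card_univ, nsmul_eq_mul, mul_comm] at hcover
  exact ENNReal.eq_inv_of_mul_eq_one_left hcover

theorem IsExchangeable.measure_rank_lt {μ : Measure (ι → α)} [IsProbabilityMeasure μ]
    (hμ : IsExchangeable μ) (hdist : ∀ i j, i ≠ j → μ {v | v i = v j} = 0) (i : ι) {k : ℕ}
    (hk : k ≤ Fintype.card ι) : μ {v | rank v i < k} = k / Fintype.card ι := by
  have hpre : {v : ι → α | rank v i < k} = (fun v => rank v i) ⁻¹' ↑(range k) := by
    ext v
    simp
  rw [hpre, ← sum_measure_preimage_singleton _ fun r _ => measurableSet_rank_eq i r]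
  simp only [Set.preimage, Set.mem_singleton_iff]
  rw [sum_congr rfl fun r hr =>
      hμ.measure_rank_eq_inv_card hdist i ((mem_range.1 hr).trans_le hk),
    sum_const, card_range, nsmul_eq_mul, div_eq_mul_inv]

end RankDistribution

theorem le_kthSmallest_iff {n k : ℕ} (hk1 : 1 ≤ k) (hkn : k ≤ n) (w : Fin n → ℝ) (t : ℝ) :
    t ≤ kthSmallest n k w ↔ #{i | w i < t} < k := by
  have hlen : k - 1 < ((List.ofFn w).mergeSort (fun a b => a ≤ b)).length := by
    rw [List.length_mergeSort, List.length_ofFn]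
    omega
  rw [kthSmallest, List.getD_eq_getElem _ _ hlen,
    List.le_getElem_iff_countP_le (List.pairwise_mergeSort' _ _) t hlen,
    (List.mergeSort_perm _ _).countP_eq, List.countP_ofFn_eq_card_filter]
  omega

theorem last_le_kthSmallest_iff {n k : ℕ} (hk1 : 1 ≤ k) (hkn : k ≤ n) (v : Fin (n + 1) → ℝ) :
    v (Fin.last n) ≤ kthSmallest n k (fun i => v i.castSucc) ↔ rank v (Fin.last n) < k := by
  rw [le_kthSmallest_iff hk1 hkn, rank_last]

theorem natCeil_mul_div_le {n : ℕ} {β : ℝ} (hβ : 0 ≤ β) :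
    (⌈((n : ℝ) + 1) * β⌉₊ : ℝ≥0∞) / ((n + 1 : ℕ) : ℝ≥0∞) ≤
      ENNReal.ofReal (β + 1 / ((n : ℝ) + 1)) := by
  have hn : (0 : ℝ) < n + 1 := by positivity
  rw [← ENNReal.ofReal_natCast, ← ENNReal.ofReal_natCast, ← ENNReal.ofReal_div_of_pos (by simpa)]
  refine ENNReal.ofReal_le_ofReal ?_
  rw [div_le_iff₀ (by simpa), Nat.cast_succ, add_mul β, one_div_mul_cancel hn.ne', mul_comm β]
  exact (Nat.ceil_lt_add_one (by positivity)).le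

/-- Conformal prediction upper coverage bound: for exchangeable, a.s. pairwise
distinct scores `S 0, …, S n`, with `q̂` the `⌈(n+1)(1-α)⌉`-th smallest of the
first `n` (calibration) scores, `P(S_{n+1} ≤ q̂) ≤ 1 - α + 1/(n+1)`. -/
theorem conformal_coverage_upper_bound
    {Ω : Type*} [MeasurableSpace Ω] (P : Measure Ω) [IsProbabilityMeasure P]
    (n : ℕ) (S : Fin (n + 1) → Ω → ℝ) (hmeas : ∀ i, Measurable (S i))
    (hexch : ∀ σ : Equiv.Perm (Fin (n + 1)),
      Measure.map (fun ω => fun i => S (σ i) ω) P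
        = Measure.map (fun ω => fun i => S i ω) P)
    (hdist : ∀ i j : Fin (n + 1), i ≠ j → P {ω | S i ω = S j ω} = 0)
    (α : ℝ) (hα : α ∈ Set.Ioo (0 : ℝ) 1)
    (hk : ⌈((n : ℝ) + 1) * (1 - α)⌉₊ ≤ n) :
    P {ω | S (Fin.last n) ω ≤
        kthSmallest n (⌈((n : ℝ) + 1) * (1 - α)⌉₊) (fun i => S i.castSucc ω)}
      ≤ ENNReal.ofReal (1 - α + 1 / ((n : ℝ) + 1)) := by
  set k := ⌈((n : ℝ) + 1) * (1 - α)⌉₊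
  obtain ⟨hα0, hα1⟩ := hα
  have hk1 : 1 ≤ k := Nat.ceil_pos.2 (mul_pos (by positivity) (by linarith))
  let T : Ω → Fin (n + 1) → ℝ := fun ω i => S i ω
  have hT : Measurable T := measurable_pi_lambda _ hmeas
  have : IsProbabilityMeasure (P.map T) := Measure.isProbabilityMeasure_map hT.aemeasurable
  have hμ : IsExchangeable (P.map T) := fun σ => by
    rw [Measure.map_map (by fun_prop) hT]
    exact hexch σ
  have hμdist : ∀ i j, i ≠ j → P.map T {v | v i = v j} = 0 := fun i j hij => by
    rw [Measure.map_apply hT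
      (measurableSet_eq_fun (measurable_pi_apply i) (measurable_pi_apply j))]
    exact hdist i j hij
  calc P {ω | S (Fin.last n) ω ≤ kthSmallest n k (fun i => S i.castSucc ω)}
      = P.map T {v | rank v (Fin.last n) < k} := by
        rw [Measure.map_apply hT (measurableSet_rank_lt _ _)]
        congr 1
        ext ω
        exact last_le_kthSmallest_iff hk1 hk (T ω)
    _ = k / ((n + 1 : ℕ) : ℝ≥0∞) := by
        rw [hμ.measure_rank_lt hμdist _ (by rw [Fintype.card_fin]; omega), Fintype.card_fin]
    _ ≤ ENNReal.ofReal (1 - α + 1 / ((n : ℝ) + 1)) := natCeil_mul_div_le (by linarith)
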